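/- arXiv:2202.01658 — 11 statements merged into one kernel-verified Lean document; each statement's English description precedes it below -/
import Mathlib

section
/- Let A be a symmetric real n×n matrix (n ≥ 1). Then there exists a unique real number α such that for every vector x ∈ ℝⁿ with nonnegative entries summing to 1, one has min_{1≤i≤n} (Ax)_i ≤ α ≤ max_{1≤i≤n} (Ax)_i. -/
/-!
Von Neumann's minimax theorem, as a case of Sion's, gives a saddle point `(a, b)` of the bilinear
payoff `(x, y) ↦ yᵀ A x` on the product of standard simplices; let `v = bᵀ A a`. As
`min_i (Ax)_i ≤ yᵀ A x ≤ max_i (Ax)_i` for every probability vector `y`, and `yᵀ A x = xᵀ A y`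
for symmetric `A`, the saddle point inequalities give `max_i (Aa)_i ≤ v ≤ min_i (Ab)_i`, and the
same two facts give weak duality `min_i (Ax)_i ≤ max_i (Ay)_i`. Weak duality against `a` and `b`
shows that `v` is admissible, and any admissible `β` lies between `min_i (Ab)_i` and
`max_i (Aa)_i`, hence equals `v`.
-/

open Matrix

section StdSimplex

variable {ι : Type*} [Fintype ι]

theorem iInf_le_dotProduct_of_mem_stdSimplex {y : ι → ℝ} (hy : y ∈ stdSimplex ℝ ι)
    (v : ι → ℝ) : ⨅ i, v i ≤ y ⬝ᵥ v :=
  calc ⨅ i, v i = ∑ j, y j * ⨅ i, v i := by rw [← Finset.sum_mul, hy.2, one_mul]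
    _ ≤ y ⬝ᵥ v := Finset.sum_le_sum fun j _ ↦
      mul_le_mul_of_nonneg_left (ciInf_le (Finite.bddBelow_range v) j) (hy.1 j)

theorem dotProduct_le_iSup_of_mem_stdSimplex {y : ι → ℝ} (hy : y ∈ stdSimplex ℝ ι)
    (v : ι → ℝ) : y ⬝ᵥ v ≤ ⨆ i, v i :=
  calc y ⬝ᵥ v ≤ ∑ j, y j * ⨆ i, v i := Finset.sum_le_sum fun j _ ↦
      mul_le_mul_of_nonneg_left (le_ciSup (Finite.bddAbove_range v) j) (hy.1 j)
    _ = ⨆ i, v i := by rw [← Finset.sum_mul, hy.2, one_mul]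

theorem iSup_le_of_forall_dotProduct_le [Nonempty ι] {v : ι → ℝ} {c : ℝ}
    (h : ∀ y ∈ stdSimplex ℝ ι, y ⬝ᵥ v ≤ c) : ⨆ i, v i ≤ c :=
  ciSup_le fun i ↦ by classical simpa using h _ (single_mem_stdSimplex ℝ i)

theorem le_iInf_of_forall_le_dotProduct [Nonempty ι] {v : ι → ℝ} {c : ℝ}
    (h : ∀ y ∈ stdSimplex ℝ ι, c ≤ y ⬝ᵥ v) : c ≤ ⨅ i, v i :=
  le_ciInf fun i ↦ by classical simpa using h _ (single_mem_stdSimplex ℝ i)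

end StdSimplex

namespace Matrix

theorem IsSymm.dotProduct_mulVec_comm {ι : Type*} [Fintype ι] {A : Matrix ι ι ℝ}
    (hA : A.IsSymm) (x y : ι → ℝ) : x ⬝ᵥ A *ᵥ y = y ⬝ᵥ A *ᵥ x := by
  rw [dotProduct_mulVec, ← mulVec_transpose, hA.eq, dotProduct_comm]

theorem IsSymm.iInf_mulVec_le_iSup_mulVec {ι : Type*} [Fintype ι] {A : Matrix ι ι ℝ}
    (hA : A.IsSymm) {x y : ι → ℝ} (hx : x ∈ stdSimplex ℝ ι) (hy : y ∈ stdSimplex ℝ ι) :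
    ⨅ i, (A *ᵥ x) i ≤ ⨆ i, (A *ᵥ y) i :=
  calc ⨅ i, (A *ᵥ x) i ≤ y ⬝ᵥ A *ᵥ x := iInf_le_dotProduct_of_mem_stdSimplex hy _
    _ = x ⬝ᵥ A *ᵥ y := hA.dotProduct_mulVec_comm y x
    _ ≤ ⨆ i, (A *ᵥ y) i := dotProduct_le_iSup_of_mem_stdSimplex hx _

theorem exists_isSaddlePointOn_stdSimplex {ι κ : Type*} [Fintype ι] [Fintype κ]
    [Nonempty ι] [Nonempty κ] (A : Matrix κ ι ℝ) :
    ∃ a ∈ stdSimplex ℝ ι, ∃ b ∈ stdSimplex ℝ κ,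
      IsSaddlePointOn (stdSimplex ℝ ι) (stdSimplex ℝ κ) (fun x y ↦ y ⬝ᵥ A *ᵥ x) a b := by
  classical
  have hbilin (x : ι → ℝ) (y : κ → ℝ) : y ⬝ᵥ A *ᵥ x = toLinearMap₂' ℝ A y x :=
    (toLinearMap₂'_apply' A y x).symm
  refine Sion.exists_isSaddlePointOn (isPathConnected_stdSimplex ι).nonempty
    (convex_stdSimplex ℝ ι) (isCompact_stdSimplex ℝ ι) (fun y _ ↦ ?_) (fun y _ ↦ ?_)
    (convex_stdSimplex ℝ κ) (isPathConnected_stdSimplex κ).nonempty (isCompact_stdSimplex ℝ κ)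
    (fun x _ ↦ ?_) (fun x _ ↦ ?_)
  · exact (by fun_prop : Continuous fun x ↦ y ⬝ᵥ A *ᵥ x).lowerSemicontinuous
      |>.lowerSemicontinuousOn _
  · simp only [hbilin]
    exact ((toLinearMap₂' ℝ A y).convexOn (convex_stdSimplex ℝ ι)).quasiconvexOn
  · exact (by fun_prop : Continuous fun y ↦ y ⬝ᵥ A *ᵥ x).upperSemicontinuous
      |>.upperSemicontinuousOn _
  · simp only [hbilin]
    exact (((toLinearMap₂' ℝ A).flip x).concaveOn (convex_stdSimplex ℝ κ)).quasiconcaveOn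

end Matrix

/-- von Neumann minimax theorem for symmetric matrices: there exists a unique
real number `α` (the value of the game) such that for every probability vector
`x` (nonnegative entries summing to 1), one has
`min_i (Ax)_i ≤ α ≤ max_i (Ax)_i`. -/
theorem minimax_symmetric (n : ℕ) (hn : 1 ≤ n)
    (A : Matrix (Fin n) (Fin n) ℝ) (hA : A.IsSymm) :
    ∃! α : ℝ, ∀ x : Fin n → ℝ, (∀ i, 0 ≤ x i) → (∑ i, x i) = 1 →
      (⨅ i, A.mulVec x i) ≤ α ∧ α ≤ ⨆ i, A.mulVec x i := by
  have : Nonempty (Fin n) := Fin.pos_iff_nonempty.mp hn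
  obtain ⟨a, ha, b, hb, hab⟩ := A.exists_isSaddlePointOn_stdSimplex
  have hmax : ⨆ i, (A *ᵥ a) i ≤ b ⬝ᵥ A *ᵥ a :=
    iSup_le_of_forall_dotProduct_le fun y hy ↦ hab a ha y hy
  have hmin : b ⬝ᵥ A *ᵥ a ≤ ⨅ i, (A *ᵥ b) i :=
    le_iInf_of_forall_le_dotProduct fun x hx ↦
      (hab x hx b hb).trans_eq (hA.dotProduct_mulVec_comm b x)
  refine ⟨b ⬝ᵥ A *ᵥ a, fun x hx₀ hx₁ ↦ ?_, fun β hβ ↦ ?_⟩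
  · have hx : x ∈ stdSimplex ℝ (Fin n) := ⟨hx₀, hx₁⟩
    exact ⟨(hA.iInf_mulVec_le_iSup_mulVec hx ha).trans hmax,
      hmin.trans (hA.iInf_mulVec_le_iSup_mulVec hb hx)⟩
  · exact le_antisymm ((hβ a ha.1 ha.2).2.trans hmax) (hmin.trans (hβ b hb.1 hb.2).1)
end

section
/- Let G be a connected simple graph on a finite vertex set V with n = |V| vertices and suppose w is a nonnegative curvature vector for G. Then for every probability measure ν on V (a function ν : V → ℝ with ν ≥ 0 and ∑_{v∈V} ν(v) = 1) there exist vertices a, b ∈ V such that ∑_{v∈V} d(a,v)·ν(v) ≤ n/‖w‖₁ ≤ ∑_{v∈V} d(b,v)·ν(v). -/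
/-- Minimax theorem for curvature: if `w` is a nonnegative curvature vector for a
connected graph `G` on `n` vertices, then for every probability measure `ν` on the
vertices there are vertices `a, b` with
`∑ v, d(a,v) ν(v) ≤ n / ‖w‖₁ ≤ ∑ v, d(b,v) ν(v)`. -/
theorem curvature_minimax {V : Type*} [Fintype V] (G : SimpleGraph V)
    (hG : G.Connected)
    (w : V → ℝ) (hw0 : ∀ v, 0 ≤ w v)
    (hw : ∀ u : V, ∑ v : V, (G.dist u v : ℝ) * w v = (Fintype.card V : ℝ))
    (ν : V → ℝ) (hν0 : ∀ v, 0 ≤ ν v) (hν1 : ∑ v : V, ν v = 1) :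
    ∃ a b : V,
      ∑ v : V, (G.dist a v : ℝ) * ν v ≤ (Fintype.card V : ℝ) / (∑ v : V, w v) ∧
      (Fintype.card V : ℝ) / (∑ v : V, w v) ≤ ∑ v : V, (G.dist b v : ℝ) * ν v := by
  have hne : Nonempty V := hG.nonempty
  have hcard : (0 : ℝ) < (Fintype.card V : ℝ) := by
    exact_mod_cast Fintype.card_pos
  set S : ℝ := ∑ v : V, w v with hS
  have hS0 : 0 < S := by
    rcases lt_or_eq_of_le (Finset.sum_nonneg fun v _ => hw0 v : (0:ℝ) ≤ S) with h | h
    · exact h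
    · exfalso
      have hall : ∀ v ∈ Finset.univ, w v = 0 := by
        intro v hv
        exact (Finset.sum_eq_zero_iff_of_nonneg fun v _ => hw0 v).mp h.symm v hv
      obtain ⟨u⟩ := hne
      have := hw u
      simp only [hall _ (Finset.mem_univ _), mul_zero, Finset.sum_const_zero] at this
      exact hcard.ne this
  set f : V → ℝ := fun u => ∑ v : V, (G.dist u v : ℝ) * ν v with hf
  -- key identity: ∑ u, w u * f u = n
  have key : ∑ u : V, w u * f u = (Fintype.card V : ℝ) := by
    have : ∑ u : V, w u * f u = ∑ v : V, (∑ u : V, (G.dist u v : ℝ) * w u) * ν v := by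
      simp only [hf, Finset.mul_sum, Finset.sum_mul]
      rw [Finset.sum_comm]
      apply Finset.sum_congr rfl; intro v _
      apply Finset.sum_congr rfl; intro u _
      ring
    rw [this]
    have hd : ∀ v : V, ∑ u : V, (G.dist u v : ℝ) * w u = (Fintype.card V : ℝ) := by
      intro v
      have := hw v
      rw [← this]
      apply Finset.sum_congr rfl; intro u _
      rw [G.dist_comm]
    simp only [hd]
    rw [← Finset.mul_sum, hν1, mul_one]
  obtain ⟨a, _, ha⟩ := Finset.exists_min_image Finset.univ f Finset.univ_nonempty
  obtain ⟨b, _, hb⟩ := Finset.exists_max_image Finset.univ f Finset.univ_nonempty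
  refine ⟨a, b, ?_, ?_⟩
  · rw [le_div_iff₀ hS0]
    calc f a * S = ∑ u : V, w u * f a := by rw [Finset.mul_sum]; apply Finset.sum_congr rfl; intros; ring
    _ ≤ ∑ u : V, w u * f u :=
        Finset.sum_le_sum fun u _ => mul_le_mul_of_nonneg_left (ha u (Finset.mem_univ u)) (hw0 u)
    _ = _ := key
  · rw [div_le_iff₀ hS0]
    calc (Fintype.card V : ℝ) = ∑ u : V, w u * f u := key.symm
    _ ≤ ∑ u : V, w u * f b :=
        Finset.sum_le_sum fun u _ => mul_le_mul_of_nonneg_left (hb u (Finset.mem_univ u)) (hw0 u)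
    _ = f b * S := by rw [Finset.mul_sum]; apply Finset.sum_congr rfl; intros; ring
end

section
/- Let G be a connected simple graph on a finite vertex set V with n = |V| vertices and suppose w is a nonnegative curvature vector for G with K = min_{v∈V} w(v). Then diam(G) ≤ 2n/‖w‖₁, and if moreover K > 0 then 2n/‖w‖₁ ≤ 2/K, so diam(G) ≤ 2/K. -/
/-- Discrete Bonnet-Myers: if `w` is a nonnegative curvature vector for a connected
graph `G` on `n` vertices with minimum entry `K`, then `diam(G) ≤ 2n/‖w‖₁`, and if
`K > 0` then moreover `2n/‖w‖₁ ≤ 2/K` (hence `diam(G) ≤ 2/K`). -/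
theorem discrete_bonnet_myers {V : Type*} [Fintype V] (G : SimpleGraph V)
    (hG : G.Connected)
    (w : V → ℝ) (hw0 : ∀ v, 0 ≤ w v)
    (hw : ∀ u : V, ∑ v : V, (G.dist u v : ℝ) * w v = (Fintype.card V : ℝ))
    (K : ℝ) (hK1 : ∀ v, K ≤ w v) (hK2 : ∃ v, w v = K) :
    (G.diam : ℝ) ≤ 2 * (Fintype.card V : ℝ) / (∑ v : V, w v) ∧
    (0 < K →
      2 * (Fintype.card V : ℝ) / (∑ v : V, w v) ≤ 2 / K ∧ (G.diam : ℝ) ≤ 2 / K) := by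
  have hne : Nonempty V := hG.nonempty
  have hcard : (0 : ℝ) < (Fintype.card V : ℝ) := by
    exact_mod_cast Fintype.card_pos
  have hsum_pos : 0 < ∑ v : V, w v := by
    rcases (Finset.sum_nonneg (fun v _ => hw0 v)).lt_or_eq with h | h
    · exact h
    · exfalso
      have hz : ∀ v ∈ Finset.univ, w v = 0 :=
        (Finset.sum_eq_zero_iff_of_nonneg (fun v _ => hw0 v)).1 h.symm
      obtain ⟨u⟩ := hne
      have := hw u
      rw [Finset.sum_eq_zero (fun v hv => by rw [hz v hv, mul_zero])] at this
      exact absurd this.symm (ne_of_gt hcard)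
  obtain ⟨u, v, huv⟩ := G.exists_dist_eq_diam
  have key : (G.diam : ℝ) * ∑ x : V, w x ≤ 2 * (Fintype.card V : ℝ) := by
    calc (G.diam : ℝ) * ∑ x : V, w x = ∑ x : V, (G.diam : ℝ) * w x := by
          rw [Finset.mul_sum]
      _ ≤ ∑ x : V, ((G.dist u x : ℝ) + (G.dist v x : ℝ)) * w x := by
          apply Finset.sum_le_sum
          intro x _
          apply mul_le_mul_of_nonneg_right _ (hw0 x)
          have := hG.dist_triangle (u := u) (v := x) (w := v)
          rw [← huv]
          have hcomm : G.dist v x = G.dist x v := SimpleGraph.dist_comm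
          rw [hcomm]
          exact_mod_cast this
      _ = 2 * (Fintype.card V : ℝ) := by
          simp only [add_mul, Finset.sum_add_distrib, hw u, hw v]
          ring
  have h1 : (G.diam : ℝ) ≤ 2 * (Fintype.card V : ℝ) / (∑ v : V, w v) :=
    (le_div_iff₀ hsum_pos).2 key
  refine ⟨h1, fun hK => ?_⟩
  have hnk : (Fintype.card V : ℝ) * K ≤ ∑ v : V, w v := by
    calc (Fintype.card V : ℝ) * K = ∑ _v : V, K := by
          rw [Finset.sum_const, nsmul_eq_mul, Finset.card_univ]
      _ ≤ ∑ v : V, w v := Finset.sum_le_sum (fun v _ => hK1 v)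
  have h2 : 2 * (Fintype.card V : ℝ) / (∑ v : V, w v) ≤ 2 / K := by
    rw [div_le_div_iff₀ hsum_pos hK]
    nlinarith
  exact ⟨h2, h1.trans h2⟩
end

section
/- Let G be a connected simple graph on a finite vertex set V with n = |V| vertices and suppose w is a nonnegative curvature vector for G with K = min_{v∈V} w(v) > 0. If diam(G)·K = 2, then w is constant: w(v) = K for every vertex v ∈ V. -/
/-- Discrete Cheng theorem: if `w` is a nonnegative curvature vector for a connected
graph `G` with minimum entry `K > 0` and `diam(G) · K = 2`, then `w` is constant
equal to `K`. -/
theorem discrete_cheng {V : Type*} [Fintype V] (G : SimpleGraph V)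
    (hG : G.Connected)
    (w : V → ℝ) (hw0 : ∀ v, 0 ≤ w v)
    (hw : ∀ u : V, ∑ v : V, (G.dist u v : ℝ) * w v = (Fintype.card V : ℝ))
    (K : ℝ) (hK1 : ∀ v, K ≤ w v) (hK2 : ∃ v, w v = K) (hKpos : 0 < K)
    (hdiam : (G.diam : ℝ) * K = 2) :
    ∀ v : V, w v = K := by
  have hne : Nonempty V := hG.nonempty
  obtain ⟨x, y, hxy⟩ := G.exists_dist_eq_diam
  set n : ℝ := (Fintype.card V : ℝ) with hn
  set D : ℝ := (G.diam : ℝ) with hD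
  have hDpos : 0 < D := by
    nlinarith [Nat.cast_nonneg (α := ℝ) G.diam]
  -- ∑ (d x v + d y v) * w v = 2n
  have hsum2 : ∑ v : V, ((G.dist x v : ℝ) + (G.dist y v : ℝ)) * w v = 2 * n := by
    have := hw x
    have := hw y
    simp_rw [add_mul]
    rw [Finset.sum_add_distrib]
    linarith
  -- each term ≥ D * w v
  have hterm : ∀ v : V, D * w v ≤ ((G.dist x v : ℝ) + (G.dist y v : ℝ)) * w v := by
    intro v
    apply mul_le_mul_of_nonneg_right _ (hw0 v)
    have htri : G.dist x y ≤ G.dist x v + G.dist v y := hG.dist_triangle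
    have hc : G.dist v y = G.dist y v := SimpleGraph.dist_comm
    rw [hxy, hc] at htri
    rw [hD]
    exact_mod_cast htri
  have hupper : D * ∑ v : V, w v ≤ 2 * n := by
    rw [Finset.mul_sum]
    rw [← hsum2]
    exact Finset.sum_le_sum fun v _ => hterm v
  have hlower : n * K ≤ ∑ v : V, w v := by
    have := Finset.card_nsmul_le_sum Finset.univ w K (fun v _ => hK1 v)
    simpa [hn, nsmul_eq_mul, mul_comm] using this
  have hsumeq : ∑ v : V, w v = n * K := by
    nlinarith
  -- each w v ≥ K, sum = n*K ⇒ w v = K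
  have hzero : ∑ v : V, (w v - K) = 0 := by
    rw [Finset.sum_sub_distrib, hsumeq]
    simp [hn, mul_comm]
  intro v
  have := (Finset.sum_eq_zero_iff_of_nonneg
    (fun u _ => sub_nonneg.mpr (hK1 u))).mp hzero v (Finset.mem_univ v)
  linarith
end

section
/- Let G be a connected simple graph on a finite vertex set V with n = |V| ≥ 2 vertices and suppose w is a nonnegative curvature vector for G. Then ‖w‖₁ ≥ n²/((n−1)·diam(G)), with equality if and only if G is the complete graph on V. -/
/-!
Let `σ(v) = ∑ᵤ d(u, v)` be the transmission of `v`. Summing the curvature equations over all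
`u` and exchanging the order of summation gives `∑ᵥ σ(v) w(v) = n²`. Since every one of the
`n - 1` vertices `u ≠ v` has `d(u, v) ≤ diam G`, we get `σ(v) ≤ (n - 1) diam G`, and with
`w ≥ 0` this yields `n² ≤ (n - 1) diam G ‖w‖₁`. Equality forces `σ(v) = (n - 1) diam G` at
some `v` with `w(v) ≠ 0` (one exists, as `w = 0` violates the curvature equations), i.e. every
other vertex lies at distance `diam G` from `v`; a neighbour of `v` then shows `diam G = 1`, so
`G` is complete. Conversely, in the complete graph `σ(v) = n - 1` and `diam G = 1`.
-/

open Finset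

namespace SimpleGraph

variable {V : Type*} [Fintype V] {G : SimpleGraph V}

noncomputable def transmission (G : SimpleGraph V) (v : V) : ℕ := ∑ u, G.dist u v

lemma transmission_eq_sum_erase [DecidableEq V] (v : V) :
    G.transmission v = ∑ u ∈ univ.erase v, G.dist u v :=
  (sum_erase (f := (G.dist · v)) univ G.dist_self).symm

lemma card_sub_one_mul_diam_eq_sum_erase [DecidableEq V] (v : V) :
    (Fintype.card V - 1) * G.diam = ∑ _u ∈ univ.erase v, G.diam := by
  rw [sum_const, card_erase_of_mem (mem_univ v), card_univ, smul_eq_mul]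

lemma Connected.dist_le_diam (hG : G.Connected) (u v : V) : G.dist u v ≤ G.diam :=
  have := hG.nonempty
  SimpleGraph.dist_le_diam (connected_iff_ediam_ne_top.mp hG)

lemma Connected.transmission_le (hG : G.Connected) (v : V) :
    G.transmission v ≤ (Fintype.card V - 1) * G.diam := by
  classical
  rw [transmission_eq_sum_erase, card_sub_one_mul_diam_eq_sum_erase v]
  exact sum_le_sum fun u _ => hG.dist_le_diam u v

lemma Connected.transmission_eq_iff (hG : G.Connected) (v : V) :
    G.transmission v = (Fintype.card V - 1) * G.diam ↔ ∀ u ≠ v, G.dist u v = G.diam := by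
  classical
  rw [transmission_eq_sum_erase, card_sub_one_mul_diam_eq_sum_erase v,
    sum_eq_sum_iff_of_le fun u _ => hG.dist_le_diam u v]
  simp only [mem_erase, mem_univ, and_true]

lemma Connected.transmission_eq_iff_eq_top [Nontrivial V] (hG : G.Connected) (v : V) :
    G.transmission v = (Fintype.card V - 1) * G.diam ↔ G = ⊤ := by
  rw [hG.transmission_eq_iff]
  constructor
  · intro h
    obtain ⟨b, hvb⟩ := exists_adj_iff_not_isIsolated.mpr (hG.preconnected.not_isIsolated v)
    rw [← diam_eq_one, ← h b hvb.ne', dist_eq_one_iff_adj]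
    exact hvb.symm
  · rintro rfl u hu
    rw [diam_top, dist_eq_one_iff_adj]
    exact hu

lemma Connected.card_sub_one_mul_diam_pos [Nontrivial V] (hG : G.Connected) :
    0 < ((Fintype.card V : ℝ) - 1) * G.diam := by
  have hcard : (1 : ℝ) < Fintype.card V := by exact_mod_cast Fintype.one_lt_card
  have hdiam : G.diam ≠ 0 := connected_iff_diam_ne_zero.mp hG
  exact mul_pos (by linarith) (by positivity)

lemma sum_transmission_mul_eq_sq {w : V → ℝ}
    (hw : ∀ u, ∑ v, (G.dist u v : ℝ) * w v = Fintype.card V) :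
    ∑ v, (G.transmission v : ℝ) * w v = (Fintype.card V : ℝ) ^ 2 := by
  simp_rw [transmission, Nat.cast_sum, sum_mul]
  rw [sum_comm]
  simp [hw, sq]

end SimpleGraph

open Finset SimpleGraph in
/-- Reverse Bonnet-Myers: if `w` is a nonnegative curvature vector for a connected
graph `G` on `n ≥ 2` vertices, then `‖w‖₁ ≥ n² / ((n-1) · diam(G))`, with equality
if and only if `G` is the complete graph. -/
theorem reverse_bonnet_myers {V : Type*} [Fintype V] (G : SimpleGraph V)
    (hG : G.Connected) (hn : 2 ≤ Fintype.card V)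
    (w : V → ℝ) (hw0 : ∀ v, 0 ≤ w v)
    (hw : ∀ u : V, ∑ v : V, (G.dist u v : ℝ) * w v = (Fintype.card V : ℝ)) :
    (Fintype.card V : ℝ) ^ 2 / (((Fintype.card V : ℝ) - 1) * (G.diam : ℝ))
      ≤ ∑ v : V, w v ∧
    ((∑ v : V, w v =
        (Fintype.card V : ℝ) ^ 2 / (((Fintype.card V : ℝ) - 1) * (G.diam : ℝ)))
      ↔ G = ⊤) := by
  have : Nontrivial V := Fintype.one_lt_card_iff_nontrivial.mp hn
  set c : ℝ := ((Fintype.card V : ℝ) - 1) * G.diam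
  have hc : (((Fintype.card V - 1) * G.diam : ℕ) : ℝ) = c := by
    push_cast [Nat.cast_sub (by omega : 1 ≤ Fintype.card V)]; rfl
  have hc_pos : 0 < c := hG.card_sub_one_mul_diam_pos
  have hslack :
      c * ∑ v, w v - (Fintype.card V : ℝ) ^ 2 = ∑ v, (c - G.transmission v) * w v := by
    simp_rw [← sum_transmission_mul_eq_sq hw, mul_sum, ← sum_sub_distrib, sub_mul]
  have hbound : ∀ v, (G.transmission v : ℝ) ≤ c := fun v =>
    hc ▸ by exact_mod_cast hG.transmission_le v
  have hterm : ∀ v, 0 ≤ (c - G.transmission v) * w v := fun v =>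
    mul_nonneg (sub_nonneg.mpr (hbound v)) (hw0 v)
  have hextremal : ∀ v, (G.transmission v : ℝ) = c ↔ G = ⊤ := fun v => by
    rw [← hc, Nat.cast_inj, hG.transmission_eq_iff_eq_top]
  refine ⟨?_, ?_⟩
  · rw [div_le_iff₀ hc_pos]
    linarith [sum_nonneg fun v (_ : v ∈ univ) => hterm v]
  rw [eq_div_iff hc_pos.ne', ← sub_eq_zero, mul_comm, hslack,
    sum_eq_zero_iff_of_nonneg fun v _ => hterm v]
  constructor
  · intro h
    obtain ⟨v, hv⟩ : ∃ v, w v ≠ 0 := by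
      by_contra! hzero
      have hu := hw (Classical.arbitrary V)
      simp only [hzero, mul_zero, sum_const_zero] at hu
      exact Fintype.card_ne_zero (by exact_mod_cast hu.symm)
    have hcv : c - G.transmission v = 0 := (mul_eq_zero.mp (h v (mem_univ v))).resolve_right hv
    exact (hextremal v).mp (sub_eq_zero.mp hcv).symm
  · intro htop v _
    rw [(hextremal v).mpr htop, sub_self, zero_mul]
end

section
/- Let G be a connected simple graph on a finite vertex set V with n = |V| ≥ 2 vertices and suppose w is a nonnegative curvature vector for G with K = min_{v∈V} w(v) > 0. Then for every function f : V → ℝ with ∑_{v∈V} f(v) = 0, one has (1/2)·∑_{u,v∈V, u∼v} (f(u) − f(v))² ≥ (‖w‖₁/(2n²))·∑_{v∈V} f(v)², and ‖w‖₁/(2n²) ≥ K/(2n). -/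
/-- Cauchy–Schwarz for lists: `(∑ l)² ≤ |l| · ∑ l²`. -/
lemma list_sq_sum_le : ∀ l : List ℝ,
    l.sum ^ 2 ≤ (l.length : ℝ) * (l.map (fun x => x ^ 2)).sum := by
  intro l
  induction l with
  | nil => simp
  | cons a t ih =>
    simp only [List.sum_cons, List.length_cons, List.map_cons]
    push_cast
    set n : ℝ := (t.length : ℝ) with hn
    set s : ℝ := t.sum
    set q : ℝ := (t.map (fun x => x ^ 2)).sum with hq
    have hq0 : 0 ≤ q := by
      apply List.sum_nonneg
      intro x hx
      simp only [List.mem_map] at hx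
      obtain ⟨y, _, rfl⟩ := hx
      positivity
    have hn0 : 0 ≤ n := by positivity
    have h1 : 0 ≤ n * q - s ^ 2 := by linarith
    have h2 : 0 ≤ (n + 1) * (n * q - s ^ 2) := mul_nonneg (by linarith) h1
    rcases eq_or_lt_of_le hn0 with h | hpos
    · have hs : s = 0 := by nlinarith
      have ht : (a + s) ^ 2 = a ^ 2 := by rw [hs]; ring
      rw [ht, ← h]
      linarith
    · have key : n * ((a + s) ^ 2) ≤ n * ((n + 1) * (a ^ 2 + q)) := by
        nlinarith [sq_nonneg (n * a - s)]
      have := le_of_mul_le_mul_left key hpos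
      linarith

/-- Telescoping a function along the darts of a walk. -/
lemma walk_telescope {V : Type*} {G : SimpleGraph V} (f : V → ℝ) :
    ∀ {u v : V} (p : G.Walk u v),
      (p.darts.map (fun d => f d.toProd.1 - f d.toProd.2)).sum = f u - f v := by
  intro u v p
  induction p with
  | nil => simp
  | cons h p ih =>
    simp only [SimpleGraph.Walk.darts_cons, List.map_cons, List.sum_cons, ih]
    ring

/-- Discrete Lichnerowicz theorem: if `w` is a nonnegative curvature vector for a
connected graph `G` on `n ≥ 2` vertices with minimum entry `K > 0`, then for every
mean-zero function `f` the Laplacian quadratic form satisfies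
`(1/2) ∑_{u ∼ v} (f(u)-f(v))² ≥ (‖w‖₁/(2n²)) ∑ f(v)²`, and `‖w‖₁/(2n²) ≥ K/(2n)`. -/
theorem discrete_lichnerowicz {V : Type*} [Fintype V] (G : SimpleGraph V)
    [DecidableRel G.Adj] (hG : G.Connected) (hn : 2 ≤ Fintype.card V)
    (w : V → ℝ) (hw0 : ∀ v, 0 ≤ w v)
    (hw : ∀ u : V, ∑ v : V, (G.dist u v : ℝ) * w v = (Fintype.card V : ℝ))
    (K : ℝ) (hK1 : ∀ v, K ≤ w v) (hK2 : ∃ v, w v = K) (hKpos : 0 < K) :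
    (∀ f : V → ℝ, ∑ v : V, f v = 0 →
      (∑ v : V, w v) / (2 * (Fintype.card V : ℝ) ^ 2) * ∑ v : V, (f v) ^ 2 ≤
        (1 / 2) * ∑ u : V, ∑ v : V, if G.Adj u v then (f u - f v) ^ 2 else 0) ∧
    K / (2 * (Fintype.card V : ℝ)) ≤
      (∑ v : V, w v) / (2 * (Fintype.card V : ℝ) ^ 2) := by
  classical
  set n : ℝ := (Fintype.card V : ℝ) with hndef
  have hnpos : (0 : ℝ) < n := by
    have h : (0 : ℝ) < (Fintype.card V : ℝ) := by
      have : (0:ℕ) < Fintype.card V := by omega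
      exact_mod_cast this
    rw [hndef]; exact h
  constructor
  · intro f hf
    set T : ℝ := ∑ u : V, ∑ v : V, if G.Adj u v then (f u - f v) ^ 2 else 0 with hT
    have hT0 : 0 ≤ T := by
      apply Finset.sum_nonneg; intro u _
      apply Finset.sum_nonneg; intro v _
      split <;> positivity
    -- key pointwise bound: (f u - f v)^2 ≤ dist u v * T
    have key : ∀ u v : V, (f u - f v) ^ 2 ≤ (G.dist u v : ℝ) * T := by
      intro u v
      obtain ⟨p, hp⟩ := hG.exists_walk_length_eq_dist u v
      set q := p.bypass with hqdef
      have hqpath : q.IsPath := p.bypass_isPath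
      have hlen : (q.length : ℝ) ≤ (G.dist u v : ℝ) := by
        exact_mod_cast hp ▸ p.length_bypass_le
      -- sum of squared increments along q
      set L : List (V × V) := q.darts.map SimpleGraph.Dart.toProd with hL
      have hLnd : L.Nodup := by
        apply List.Nodup.map SimpleGraph.Dart.toProd_injective
        exact SimpleGraph.Walk.darts_nodup_of_support_nodup hqpath.support_nodup
      set g : V × V → ℝ := fun x => if G.Adj x.1 x.2 then (f x.1 - f x.2) ^ 2 else 0 with hg
      have hg0 : ∀ x, 0 ≤ g x := by
        intro x; simp only [hg]; split <;> positivity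
      have hsq : (q.darts.map (fun d => (f d.toProd.1 - f d.toProd.2) ^ 2)).sum
          = ∑ x ∈ L.toFinset, g x := by
        rw [List.sum_toFinset _ hLnd, hL, List.map_map]
        congr 1
        apply List.map_congr_left
        intro d _
        simp only [Function.comp, hg, if_pos d.adj]
      have hsumT : (q.darts.map (fun d => (f d.toProd.1 - f d.toProd.2) ^ 2)).sum ≤ T := by
        rw [hsq]
        have : ∑ x ∈ L.toFinset, g x ≤ ∑ x ∈ (Finset.univ ×ˢ Finset.univ), g x := by
          apply Finset.sum_le_sum_of_subset_of_nonneg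
          · intro x _; simp
          · intro x _ _; exact hg0 x
        refine this.trans_eq ?_
        rw [Finset.sum_product]
      have hsq0 : 0 ≤ (q.darts.map (fun d => (f d.toProd.1 - f d.toProd.2) ^ 2)).sum := by
        apply List.sum_nonneg
        intro x hx
        simp only [List.mem_map] at hx
        obtain ⟨d, _, rfl⟩ := hx
        positivity
      calc (f u - f v) ^ 2
          = ((q.darts.map (fun d => f d.toProd.1 - f d.toProd.2)).sum) ^ 2 := by
            rw [walk_telescope]
        _ ≤ ((q.darts.map (fun d => f d.toProd.1 - f d.toProd.2)).length : ℝ) *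
              ((q.darts.map (fun d => f d.toProd.1 - f d.toProd.2)).map (fun x => x ^ 2)).sum :=
            list_sq_sum_le _
        _ = (q.length : ℝ) * (q.darts.map (fun d => (f d.toProd.1 - f d.toProd.2) ^ 2)).sum := by
            rw [List.length_map, SimpleGraph.Walk.length_darts, List.map_map]
            rfl
        _ ≤ (G.dist u v : ℝ) * T := by
            apply mul_le_mul hlen hsumT hsq0
            positivity
    -- summed bound
    have h2 : ∑ u : V, ∑ v : V, w v * (f u - f v) ^ 2 ≤ n * n * T := by
      have : ∑ u : V, ∑ v : V, w v * (f u - f v) ^ 2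
          ≤ ∑ u : V, ∑ v : V, w v * ((G.dist u v : ℝ) * T) := by
        apply Finset.sum_le_sum; intro u _
        apply Finset.sum_le_sum; intro v _
        exact mul_le_mul_of_nonneg_left (key u v) (hw0 v)
      refine this.trans_eq ?_
      have inner : ∀ u : V, ∑ v : V, w v * ((G.dist u v : ℝ) * T) = n * T := by
        intro u
        have : ∑ v : V, w v * ((G.dist u v : ℝ) * T)
            = (∑ v : V, (G.dist u v : ℝ) * w v) * T := by
          rw [Finset.sum_mul]
          apply Finset.sum_congr rfl
          intro v _; ring
        rw [this, hw u]
      rw [Finset.sum_congr rfl (fun u _ => inner u), Finset.sum_const, Finset.card_univ,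
        nsmul_eq_mul]
      ring
    -- expansion: LHS of h2 ≥ (∑ w)(∑ f²)
    have h1 : (∑ v : V, w v) * (∑ v : V, f v ^ 2) ≤ ∑ u : V, ∑ v : V, w v * (f u - f v) ^ 2 := by
      have expand : ∑ u : V, ∑ v : V, w v * (f u - f v) ^ 2
          = (∑ v : V, w v) * (∑ v : V, f v ^ 2) + n * (∑ v : V, w v * f v ^ 2)
            - 2 * (∑ v : V, f v) * (∑ v : V, w v * f v) := by
        have hrow : ∀ u : V, ∑ v : V, w v * (f u - f v) ^ 2
            = f u ^ 2 * (∑ v : V, w v) - f u * (2 * (∑ v : V, w v * f v))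
              + (∑ v : V, w v * f v ^ 2) := by
          intro u
          simp only [Finset.mul_sum]
          rw [← Finset.sum_sub_distrib, ← Finset.sum_add_distrib]
          apply Finset.sum_congr rfl
          intro v _; ring
        rw [Finset.sum_congr rfl (fun u _ => hrow u)]
        rw [Finset.sum_add_distrib, Finset.sum_sub_distrib, ← Finset.sum_mul, ← Finset.sum_mul,
          Finset.sum_const, Finset.card_univ, nsmul_eq_mul]
        rw [← hndef]
        ring
      rw [expand, hf]
      have hwf2 : 0 ≤ ∑ v : V, w v * f v ^ 2 := by
        apply Finset.sum_nonneg; intro v _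
        exact mul_nonneg (hw0 v) (by positivity)
      nlinarith [mul_nonneg (le_of_lt hnpos) hwf2]
    -- conclude
    have hmain : (∑ v : V, w v) * (∑ v : V, f v ^ 2) ≤ n * n * T := h1.trans h2
    rw [div_mul_eq_mul_div, div_le_iff₀ (by positivity)]
    calc (∑ v : V, w v) * (∑ v : V, f v ^ 2) ≤ n * n * T := hmain
      _ ≤ 1 / 2 * T * (2 * n ^ 2) := le_of_eq (by ring)
  · have hsum : n * K ≤ ∑ v : V, w v := by
      have : ∑ _v : V, K ≤ ∑ v : V, w v := Finset.sum_le_sum fun v _ => hK1 v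
      rwa [Finset.sum_const, Finset.card_univ, nsmul_eq_mul] at this
    rw [div_le_div_iff₀ (by positivity) (by positivity)]
    nlinarith [hsum, hnpos]
end

section
/- Let G be a connected simple graph on a finite vertex set V with n = |V| ≥ 2 vertices, and let w : V → ℝ be an arbitrary vector with strictly positive entries; set K = min_{v∈V} w(v) and ‖Dw‖_∞ = max_{u∈V} ∑_{v∈V} d(u,v)·w(v). Then for every function f : V → ℝ with ∑_{v∈V} f(v) = 0, one has (1/2)·∑_{u,v∈V, u∼v} (f(u) − f(v))² ≥ (K/(8·‖Dw‖_∞))·∑_{v∈V} f(v)². -/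
/-!
Along a shortest path from `u` to `v`, telescoping and Cauchy–Schwarz give
`(f u - f v)² ≤ d(u,v) · D`, where `D = ∑_{u ∼ v} (f u - f v)²` counts each edge twice.
Weighting by `w v ≥ K` and summing over `v` yields `K · ∑_v (f u - f v)² ≤ ‖Dw‖_∞ · D` for
every `u`; summing over `u`, the mean-zero condition turns the left side into `2 n K ∑ f²`.
-/

open Finset

theorem Finset.sum_sum_sub_sq {ι R : Type*} [Fintype ι] [CommRing R] (f : ι → R) :
    ∑ i, ∑ j, (f i - f j) ^ 2 = 2 * (Fintype.card ι * ∑ i, f i ^ 2 - (∑ i, f i) ^ 2) := by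
  simp only [sub_sq, sum_add_distrib, sum_sub_distrib, ← mul_sum, ← sum_mul, sum_const, card_univ,
    nsmul_eq_mul]
  ring

namespace SimpleGraph

variable {V : Type*} {G : SimpleGraph V}

theorem sum_darts_eq_sum_sum_ite_adj [Fintype V] [DecidableEq V] [DecidableRel G.Adj]
    {M : Type*} [AddCommMonoid M] (φ : V → V → M) :
    ∑ d : G.Dart, φ d.fst d.snd = ∑ u, ∑ v, if G.Adj u v then φ u v else 0 := by
  rw [← Fintype.sum_prod_type' (f := fun u v => if G.Adj u v then φ u v else 0),
    ← sum_filter, sum_subtype _ fun x => mem_filter_univ x]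
  exact Fintype.sum_equiv ⟨fun d => ⟨d.toProd, d.adj⟩, fun x => ⟨x.1, x.2⟩, fun _ => rfl,
    fun _ => rfl⟩ _ _ fun _ => rfl

theorem Walk.sub_eq_sum_darts {α : Type*} [AddCommGroup α] (f : V → α) {u v : V}
    (p : G.Walk u v) : f u - f v = (p.darts.map fun d => f d.fst - f d.snd).sum := by
  induction p with
  | nil => simp
  | cons _ _ ih => simp [← ih]

theorem Walk.IsPath.sq_sub_le_length_mul [Fintype V] [DecidableEq V] [DecidableRel G.Adj]
    (f : V → ℝ) {u v : V} {p : G.Walk u v} (hp : p.IsPath) :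
    (f u - f v) ^ 2 ≤ p.length * ∑ d : G.Dart, (f d.fst - f d.snd) ^ 2 := by
  have hnodup := darts_nodup_of_support_nodup hp.support_nodup
  calc (f u - f v) ^ 2 = (∑ d ∈ p.darts.toFinset, (f d.fst - f d.snd)) ^ 2 := by
        rw [List.sum_toFinset _ hnodup, ← p.sub_eq_sum_darts]
    _ ≤ #p.darts.toFinset * ∑ d ∈ p.darts.toFinset, (f d.fst - f d.snd) ^ 2 :=
        sq_sum_le_card_mul_sum_sq ..
    _ ≤ p.length * ∑ d : G.Dart, (f d.fst - f d.snd) ^ 2 := by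
        rw [List.toFinset_card_of_nodup hnodup, p.length_darts]
        gcongr
        exact subset_univ _

theorem Connected.sq_sub_le_dist_mul [Fintype V] [DecidableRel G.Adj] (hG : G.Connected)
    (f : V → ℝ) (u v : V) :
    (f u - f v) ^ 2 ≤ (G.dist u v : ℝ) * ∑ u, ∑ v, if G.Adj u v then (f u - f v) ^ 2 else 0 := by
  classical
  obtain ⟨p, hp, hlen⟩ := hG.exists_path_of_dist u v
  rw [← hlen, ← sum_darts_eq_sum_sum_ite_adj]
  exact hp.sq_sub_le_length_mul f

theorem Connected.two_mul_mul_sum_sq_le_of_sum_eq_zero [Fintype V] [Nonempty V]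
    [DecidableRel G.Adj] (hG : G.Connected) {w : V → ℝ} (hw : ∀ v, 0 ≤ w v) {K : ℝ}
    (hK : ∀ v, K ≤ w v) {M : ℝ} (hM : ∀ u, ∑ v, (G.dist u v : ℝ) * w v ≤ M) {f : V → ℝ}
    (hf : ∑ v, f v = 0) :
    2 * K * ∑ v, f v ^ 2 ≤ M * ∑ u, ∑ v, if G.Adj u v then (f u - f v) ^ 2 else 0 := by
  set D := ∑ u, ∑ v, if G.Adj u v then (f u - f v) ^ 2 else 0
  have hrow (u : V) : K * ∑ v, (f u - f v) ^ 2 ≤ M * D := calc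
    K * ∑ v, (f u - f v) ^ 2 ≤ ∑ v, w v * (f u - f v) ^ 2 := by
      rw [mul_sum]
      gcongr with v
      exact hK v
    _ ≤ ∑ v, w v * ((G.dist u v : ℝ) * D) := by
      gcongr with v
      · exact hw v
      · exact hG.sq_sub_le_dist_mul f u v
    _ = (∑ v, (G.dist u v : ℝ) * w v) * D := by
      rw [sum_mul]
      exact sum_congr rfl fun v _ => by ring
    _ ≤ M * D := by
      gcongr
      exact hM u
  have hsum := sum_le_sum fun u (_ : u ∈ univ) => hrow u
  rw [← mul_sum, sum_sum_sub_sq, hf, sum_const, card_univ, nsmul_eq_mul] at hsum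
  have hcard : (0 : ℝ) < Fintype.card V := by exact_mod_cast Fintype.card_pos
  refine le_of_mul_le_mul_left ?_ hcard
  linarith

end SimpleGraph

theorem generalized_lichnerowicz_general {V : Type*} [Fintype V] (G : SimpleGraph V)
    [DecidableRel G.Adj] (hG : G.Connected) (hn : 2 ≤ Fintype.card V)
    (w : V → ℝ) (hw : ∀ v, 0 < w v)
    (K : ℝ) (hK1 : ∀ v, K ≤ w v)
    (M : ℝ) (hM1 : ∀ u : V, ∑ v : V, (G.dist u v : ℝ) * w v ≤ M) :
    ∀ f : V → ℝ, ∑ v : V, f v = 0 →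
      (K / (8 * M)) * ∑ v : V, (f v) ^ 2 ≤
        (1 / 2) * ∑ u : V, ∑ v : V, if G.Adj u v then (f u - f v) ^ 2 else 0 := by
  intro f hf
  have : Nonempty V := Fintype.card_pos_iff.mp (by omega)
  have hM : 0 ≤ M :=
    (sum_nonneg fun v _ => mul_nonneg (Nat.cast_nonneg _) (hw v).le).trans
      (hM1 (Classical.arbitrary V))
  have hD : 0 ≤ ∑ u, ∑ v, if G.Adj u v then (f u - f v) ^ 2 else 0 := by positivity
  have key := hG.two_mul_mul_sum_sq_le_of_sum_eq_zero (fun v => (hw v).le) hK1 hM1 hf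
  rcases hM.eq_or_lt with rfl | hM
  · simpa using hD
  rw [div_mul_eq_mul_div, div_le_iff₀ (by positivity)]
  linarith [mul_nonneg hM.le hD]

/-- Generalized Lichnerowicz (Theorem 5, second part): for a connected graph `G` on
`n ≥ 2` vertices and an arbitrary strictly positive vector `w` with minimum entry `K`
and `‖Dw‖_∞ = max_u ∑_v d(u,v) w(v)`, every mean-zero function `f` satisfies
`(1/2) ∑_{u ∼ v} (f(u)-f(v))² ≥ (K/(8‖Dw‖_∞)) ∑ f(v)²`. -/
theorem generalized_lichnerowicz {V : Type*} [Fintype V] (G : SimpleGraph V)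
    [DecidableRel G.Adj] (hG : G.Connected) (hn : 2 ≤ Fintype.card V)
    (w : V → ℝ) (hw : ∀ v, 0 < w v)
    (K : ℝ) (hK1 : ∀ v, K ≤ w v) (hK2 : ∃ v, w v = K)
    (M : ℝ) (hM1 : ∀ u : V, ∑ v : V, (G.dist u v : ℝ) * w v ≤ M)
    (hM2 : ∃ u : V, ∑ v : V, (G.dist u v : ℝ) * w v = M) :
    ∀ f : V → ℝ, ∑ v : V, f v = 0 →
      (K / (8 * M)) * ∑ v : V, (f v) ^ 2 ≤
        (1 / 2) * ∑ u : V, ∑ v : V, if G.Adj u v then (f u - f v) ^ 2 else 0 :=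
  generalized_lichnerowicz_general G hG hn w hw K hK1 M hM1
end

section
/- Let G be a connected simple graph on vertex set V₁ with n₁ = |V₁| vertices admitting a nonnegative curvature vector w₁, and let H be a connected simple graph on vertex set V₂ with n₂ = |V₂| vertices admitting a nonnegative curvature vector w₂. Then the Cartesian (box) product G □ H on V₁ × V₂ admits a nonnegative curvature vector; explicitly, the vector w(g,h) = (‖w₁‖₁/n₁ + ‖w₂‖₁/n₂)^{-1} · w₁(g)·w₂(h) satisfies ∑_{(g₂,h₂)∈V₁×V₂} d_{G□H}((g₁,h₁),(g₂,h₂))·w(g₂,h₂) = n₁·n₂ for every (g₁,h₁) ∈ V₁×V₂, and w is nonnegative. -/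
/-!
Distances in `G □ H` add coordinatewise, so against the product weight `w₁(a) w₂(b)` the distance
sum from `(g, h)` splits as `n₁ ‖w₂‖₁ + ‖w₁‖₁ n₂ = (‖w₁‖₁/n₁ + ‖w₂‖₁/n₂) n₁ n₂`. Nonnegativity
forces `‖wᵢ‖₁ > 0` (otherwise the curvature equations would read `0 = nᵢ`), so the normalising
constant can be divided out.
-/

open Finset

namespace SimpleGraph

variable {V W : Type*} {G : SimpleGraph V} {H : SimpleGraph W}

theorem dist_boxProd (hG : G.Preconnected) (hH : H.Preconnected) (x y : V × W) :
    (G □ H).dist x y = G.dist x.1 y.1 + H.dist x.2 y.2 := by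
  have hGH : (G □ H).Reachable x y := reachable_boxProd.mpr ⟨hG _ _, hH _ _⟩
  have : ((G □ H).dist x y : ℕ∞) = G.dist x.1 y.1 + H.dist x.2 y.2 := by
    rw [hGH.coe_dist_eq_edist, edist_boxProd, (hG _ _).coe_dist_eq_edist,
      (hH _ _).coe_dist_eq_edist]
  exact_mod_cast this

variable [Fintype V] [Fintype W]

def IsCurvatureVector (G : SimpleGraph V) (w : V → ℝ) : Prop :=
  ∀ u, ∑ v, (G.dist u v : ℝ) * w v = Fintype.card V

theorem IsCurvatureVector.sum_pos [Nonempty V] {w : V → ℝ} (hw : G.IsCurvatureVector w)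
    (hw0 : ∀ v, 0 ≤ w v) : 0 < ∑ v, w v := by
  obtain ⟨u⟩ := ‹Nonempty V›
  have hne : ∑ v, (G.dist u v : ℝ) * w v ≠ 0 := by
    rw [hw u]; exact_mod_cast Fintype.card_ne_zero
  obtain ⟨v, -, hv⟩ := exists_ne_zero_of_sum_ne_zero hne
  exact Finset.sum_pos' (fun v _ => hw0 v)
    ⟨v, mem_univ v, (hw0 v).lt_of_ne' (right_ne_zero_of_mul hv)⟩

theorem IsCurvatureVector.sum_dist_boxProd_mul (hG : G.Preconnected) (hH : H.Preconnected)
    {w₁ : V → ℝ} {w₂ : W → ℝ} (hw₁ : G.IsCurvatureVector w₁) (hw₂ : H.IsCurvatureVector w₂)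
    (p : V × W) :
    ∑ q : V × W, ((G □ H).dist p q : ℝ) * (w₁ q.1 * w₂ q.2) =
      Fintype.card V * ∑ b, w₂ b + (∑ a, w₁ a) * Fintype.card W := by
  simp_rw [← hw₁ p.1, ← hw₂ p.2, Fintype.sum_prod_type, dist_boxProd hG hH, Nat.cast_add,
    add_mul, sum_add_distrib, sum_mul_sum]
  congr 1 <;> refine sum_congr rfl fun a _ => sum_congr rfl fun b _ => by ring

theorem IsCurvatureVector.boxProd [Nonempty V] [Nonempty W] (hG : G.Preconnected)
    (hH : H.Preconnected) {w₁ : V → ℝ} {w₂ : W → ℝ} (hw₁ : G.IsCurvatureVector w₁)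
    (hw₂ : H.IsCurvatureVector w₂)
    (hc : (∑ v, w₁ v) / Fintype.card V + (∑ v, w₂ v) / Fintype.card W ≠ 0) :
    (G □ H).IsCurvatureVector fun q =>
      ((∑ v, w₁ v) / Fintype.card V + (∑ v, w₂ v) / Fintype.card W)⁻¹ * (w₁ q.1 * w₂ q.2) := by
  intro p
  have hV : (Fintype.card V : ℝ) ≠ 0 := by exact_mod_cast Fintype.card_ne_zero
  have hW : (Fintype.card W : ℝ) ≠ 0 := by exact_mod_cast Fintype.card_ne_zero
  have hsum : Fintype.card V * ∑ b, w₂ b + (∑ a, w₁ a) * Fintype.card W =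
      ((∑ v, w₁ v) / Fintype.card V + (∑ v, w₂ v) / Fintype.card W) *
        (Fintype.card V * Fintype.card W) := by
    field_simp
    ring
  simp_rw [mul_left_comm _ (_⁻¹), ← mul_sum, hw₁.sum_dist_boxProd_mul hG hH hw₂ p, hsum,
    inv_mul_cancel_left₀ hc, Fintype.card_prod, Nat.cast_mul]

end SimpleGraph

open SimpleGraph in
/-- Products of nonnegatively curved graphs are nonnegatively curved: if `w₁, w₂` are
nonnegative curvature vectors for connected graphs `G, H`, then
`w(g,h) = (‖w₁‖₁/n₁ + ‖w₂‖₁/n₂)⁻¹ · w₁(g) w₂(h)` is a nonnegative curvature vector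
for the box product `G □ H`. -/
theorem boxProd_nonneg_curvature {V₁ V₂ : Type*} [Fintype V₁] [Fintype V₂]
    (G : SimpleGraph V₁) (H : SimpleGraph V₂)
    (hG : G.Connected) (hH : H.Connected)
    (w₁ : V₁ → ℝ) (hw₁0 : ∀ v, 0 ≤ w₁ v)
    (hw₁ : ∀ u : V₁, ∑ v : V₁, (G.dist u v : ℝ) * w₁ v = (Fintype.card V₁ : ℝ))
    (w₂ : V₂ → ℝ) (hw₂0 : ∀ v, 0 ≤ w₂ v)
    (hw₂ : ∀ u : V₂, ∑ v : V₂, (H.dist u v : ℝ) * w₂ v = (Fintype.card V₂ : ℝ)) :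
    (∀ p : V₁ × V₂,
      0 ≤ ((∑ v : V₁, w₁ v) / (Fintype.card V₁ : ℝ) +
            (∑ v : V₂, w₂ v) / (Fintype.card V₂ : ℝ))⁻¹ * (w₁ p.1 * w₂ p.2)) ∧
    (∀ p : V₁ × V₂,
      ∑ q : V₁ × V₂, ((G.boxProd H).dist p q : ℝ) *
          (((∑ v : V₁, w₁ v) / (Fintype.card V₁ : ℝ) +
            (∑ v : V₂, w₂ v) / (Fintype.card V₂ : ℝ))⁻¹ * (w₁ q.1 * w₂ q.2)) =
        (Fintype.card V₁ : ℝ) * (Fintype.card V₂ : ℝ)) := by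
  have := hG.nonempty
  have := hH.nonempty
  have hS₁ := IsCurvatureVector.sum_pos hw₁ hw₁0
  have hS₂ := IsCurvatureVector.sum_pos hw₂ hw₂0
  have hc : 0 < (∑ v, w₁ v) / Fintype.card V₁ + (∑ v, w₂ v) / Fintype.card V₂ := by positivity
  have hprod := IsCurvatureVector.boxProd hG.preconnected hH.preconnected hw₁ hw₂ hc.ne'
  refine ⟨fun p => mul_nonneg (inv_nonneg.mpr hc.le) (mul_nonneg (hw₁0 _) (hw₂0 _)),
    fun p => ?_⟩
  simpa only [Fintype.card_prod, Nat.cast_mul] using hprod p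
end

section
/- Let G be a connected simple graph on a finite vertex set V with n = |V| vertices, and suppose w₁ and w₂ are both nonnegative curvature vectors for G. Then ∑_{v∈V} w₁(v) = ∑_{v∈V} w₂(v). -/
/-- Invariance of total curvature: any two nonnegative curvature vectors for a
connected graph `G` have the same total mass. -/
theorem total_curvature_invariant {V : Type*} [Fintype V]
    (G : SimpleGraph V) (hG : G.Connected)
    (w₁ w₂ : V → ℝ) (hw₁0 : ∀ v, 0 ≤ w₁ v) (hw₂0 : ∀ v, 0 ≤ w₂ v)
    (hw₁ : ∀ u : V, ∑ v : V, (G.dist u v : ℝ) * w₁ v = (Fintype.card V : ℝ))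
    (hw₂ : ∀ u : V, ∑ v : V, (G.dist u v : ℝ) * w₂ v = (Fintype.card V : ℝ)) :
    ∑ v : V, w₁ v = ∑ v : V, w₂ v := by
  have hne : Nonempty V := hG.nonempty
  have hn : (Fintype.card V : ℝ) ≠ 0 := by
    exact_mod_cast Fintype.card_ne_zero
  have key : ∑ u : V, ∑ v : V, w₂ u * ((G.dist u v : ℝ) * w₁ v)
      = ∑ v : V, ∑ u : V, w₁ v * ((G.dist v u : ℝ) * w₂ u) := by
    rw [Finset.sum_comm]
    apply Finset.sum_congr rfl; intro v _
    apply Finset.sum_congr rfl; intro u _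
    rw [G.dist_comm]; ring
  have h1 : ∑ u : V, ∑ v : V, w₂ u * ((G.dist u v : ℝ) * w₁ v)
      = (Fintype.card V : ℝ) * ∑ u : V, w₂ u := by
    rw [Finset.mul_sum]
    apply Finset.sum_congr rfl; intro u _
    rw [← Finset.mul_sum, hw₁ u]; ring
  have h2 : ∑ v : V, ∑ u : V, w₁ v * ((G.dist v u : ℝ) * w₂ u)
      = (Fintype.card V : ℝ) * ∑ v : V, w₁ v := by
    rw [Finset.mul_sum]
    apply Finset.sum_congr rfl; intro v _
    rw [← Finset.mul_sum, hw₂ v]; ring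
  have := key
  rw [h1, h2] at this
  exact (mul_left_cancel₀ hn this.symm)
end

section
/- Let G be a connected simple graph on a finite vertex set V with n = |V| ≥ 2 vertices and suppose w is a nonnegative curvature vector for G. Then min_{v∈V} w(v) ≤ n/(n−1), with equality if and only if G is the complete graph on V. In particular, min_{v∈V} w(v) ≤ 2. -/
open Finset

/-- If every "erase one vertex" sum of `w` equals `n`, then `w` is constant
equal to `n/(n-1)`. -/
lemma const_of_erase_sums {V : Type*} [Fintype V] [DecidableEq V]
    (hn : 2 ≤ Fintype.card V) (w : V → ℝ)
    (h : ∀ u : V, ∑ v ∈ Finset.univ.erase u, w v = (Fintype.card V : ℝ)) :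
    ∀ v : V, w v = (Fintype.card V : ℝ) / ((Fintype.card V : ℝ) - 1) := by
  set n : ℝ := (Fintype.card V : ℝ) with hnd
  have hn2 : (2 : ℝ) ≤ n := by rw [hnd]; exact_mod_cast hn
  have hpos : (0 : ℝ) < n - 1 := by linarith
  have hconst : ∀ u : V, w u = (∑ v : V, w v) - n := by
    intro u
    have := Finset.add_sum_erase Finset.univ w (Finset.mem_univ u)
    rw [h u] at this
    linarith [this]
  intro v
  have hcard : ((Finset.univ.erase v).card : ℝ) = n - 1 := by
    rw [Finset.card_erase_of_mem (Finset.mem_univ v), Finset.card_univ,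
      Nat.cast_sub (by omega), Nat.cast_one, hnd]
  have hsum : ∑ x ∈ Finset.univ.erase v, w x
      = (n - 1) * ((∑ x : V, w x) - n) := by
    rw [Finset.sum_congr rfl (fun x _ => hconst x), Finset.sum_const,
      nsmul_eq_mul, hcard]
  rw [h v] at hsum
  rw [hconst v]
  field_simp
  linarith [hsum]

/-- For a connected graph `G` on `n ≥ 2` vertices with a nonnegative curvature
vector `w` and `K = min_v w(v)`, one has `K ≤ n/(n-1)`, with equality if and
only if `G` is the complete graph; in particular `K ≤ 2`. -/
theorem min_curvature_le {V : Type*} [Fintype V]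
    (G : SimpleGraph V) (hG : G.Connected) (hn : 2 ≤ Fintype.card V)
    (w : V → ℝ) (hw0 : ∀ v, 0 ≤ w v)
    (hw : ∀ u : V, ∑ v : V, (G.dist u v : ℝ) * w v = (Fintype.card V : ℝ))
    (K : ℝ) (hK1 : ∀ v, K ≤ w v) (hK2 : ∃ v, w v = K) :
    K ≤ (Fintype.card V : ℝ) / ((Fintype.card V : ℝ) - 1) ∧
    (K = (Fintype.card V : ℝ) / ((Fintype.card V : ℝ) - 1) ↔ G = ⊤) ∧
    K ≤ 2 := by
  classical
  set n : ℝ := (Fintype.card V : ℝ) with hnd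
  have hn2 : (2 : ℝ) ≤ n := by rw [hnd]; exact_mod_cast hn
  have hpos : (0 : ℝ) < n - 1 := by linarith
  obtain ⟨v₀, hv₀⟩ := hK2
  have hK0 : 0 ≤ K := hv₀ ▸ hw0 v₀
  have hcast : ∀ u : V, ((Finset.univ.erase u).card : ℝ) = n - 1 := by
    intro u
    rw [Finset.card_erase_of_mem (Finset.mem_univ u), Finset.card_univ,
      Nat.cast_sub (by omega), Nat.cast_one, hnd]
  -- distances are at least 1 off diagonal
  have hd1 : ∀ u v : V, u ≠ v → (1 : ℝ) ≤ (G.dist u v : ℝ) := by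
    intro u v huv
    exact_mod_cast hG.pos_dist_of_ne huv
  -- erase sums are at most n
  have hB : ∀ u : V, ∑ v ∈ Finset.univ.erase u, w v ≤ n := by
    intro u
    calc ∑ v ∈ Finset.univ.erase u, w v
        ≤ ∑ v ∈ Finset.univ.erase u, (G.dist u v : ℝ) * w v := by
          apply Finset.sum_le_sum
          intro v hv
          have hne : u ≠ v := fun h => (Finset.mem_erase.mp hv).1 h.symm
          nlinarith [hd1 u v hne, hw0 v]
      _ ≤ ∑ v : V, (G.dist u v : ℝ) * w v := by
          apply Finset.sum_le_sum_of_subset_of_nonneg (Finset.erase_subset _ _)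
          intro v _ _
          exact mul_nonneg (Nat.cast_nonneg _) (hw0 v)
      _ = n := hw u
  -- erase sums are at least (n-1)K
  have hC : ∀ u : V, (n - 1) * K ≤ ∑ v ∈ Finset.univ.erase u, w v := by
    intro u
    calc (n - 1) * K = ∑ _v ∈ Finset.univ.erase u, K := by
          rw [Finset.sum_const, nsmul_eq_mul, hcast u]
      _ ≤ ∑ v ∈ Finset.univ.erase u, w v := Finset.sum_le_sum fun v _ => hK1 v
  have hmain : K ≤ n / (n - 1) := by
    rw [le_div_iff₀ hpos]
    have := le_trans (hC v₀) (hB v₀)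
    linarith
  refine ⟨hmain, ⟨?_, ?_⟩, by
    rw [le_div_iff₀ hpos] at hmain; nlinarith⟩
  · -- equality → complete
    intro hKeq
    have hKn : (n - 1) * K = n := by
      rw [hKeq]; field_simp
    have herase : ∀ u : V, ∑ v ∈ Finset.univ.erase u, w v = n := fun u =>
      le_antisymm (hB u) (hKn ▸ hC u)
    have hwconst : ∀ v : V, w v = n / (n - 1) := const_of_erase_sums hn w herase
    have hwK : ∀ v : V, w v = K := fun v => by rw [hwconst v, hKeq]
    have hKpos : 0 < K := by
      rw [hKeq]; exact div_pos (by linarith) hpos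
    -- show all off-diagonal distances equal 1
    ext u v
    simp only [SimpleGraph.top_adj]
    constructor
    · exact fun h => h.ne
    · intro huv
      rw [← SimpleGraph.dist_eq_one_iff_adj]
      by_contra hne
      have h2 : (2 : ℝ) ≤ (G.dist u v : ℝ) := by
        have h1 := hG.pos_dist_of_ne huv
        have : 2 ≤ G.dist u v := by omega
        exact_mod_cast this
      have hstrict : ∑ x ∈ Finset.univ.erase u, w x
          < ∑ x ∈ Finset.univ.erase u, (G.dist u x : ℝ) * w x := by
        apply Finset.sum_lt_sum
        · intro x hx
          have hne' : u ≠ x := fun h => (Finset.mem_erase.mp hx).1 h.symm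
          nlinarith [hd1 u x hne', hw0 x]
        · refine ⟨v, Finset.mem_erase.mpr ⟨huv.symm, Finset.mem_univ v⟩, ?_⟩
          rw [hwK v]
          nlinarith
      have hle : ∑ x ∈ Finset.univ.erase u, (G.dist u x : ℝ) * w x
          ≤ ∑ x : V, (G.dist u x : ℝ) * w x :=
        Finset.sum_le_sum_of_subset_of_nonneg (Finset.erase_subset _ _)
          (fun x _ _ => mul_nonneg (Nat.cast_nonneg _) (hw0 x))
      linarith [hstrict, hle, herase u, hw u]
  · -- complete → equality
    intro hGtop
    have hdist : ∀ u v : V, u ≠ v → G.dist u v = 1 := by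
      intro u v huv
      rw [SimpleGraph.dist_eq_one_iff_adj, hGtop]
      exact huv
    have herase : ∀ u : V, ∑ v ∈ Finset.univ.erase u, w v = n := by
      intro u
      have h := hw u
      rw [← Finset.add_sum_erase Finset.univ _ (Finset.mem_univ u)] at h
      rw [SimpleGraph.dist_self] at h
      simp only [Nat.cast_zero, zero_mul, zero_add] at h
      rw [← h]
      apply Finset.sum_congr rfl
      intro v hv
      have hne : u ≠ v := fun hx => (Finset.mem_erase.mp hv).1 hx.symm
      rw [hdist u v hne]
      norm_num
    have hwconst := const_of_erase_sums hn w herase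
    rw [← hv₀, hwconst v₀]
end

section
/- Let G be a connected simple graph on a finite vertex set V with n = |V| ≥ 2 vertices, and suppose G has constant curvature K > 0, i.e. the constant vector with value K is a curvature vector. Then 1/K ≤ diam(G) ≤ 2/K. -/
/-- A connected graph on `n ≥ 2` vertices with constant curvature `K > 0` has
diameter between `1/K` and `2/K`. -/
theorem constant_curvature_diam_bounds {V : Type*} [Fintype V]
    (G : SimpleGraph V) (hG : G.Connected) (hn : 2 ≤ Fintype.card V)
    (K : ℝ) (hKpos : 0 < K)
    (hK : ∀ u : V, ∑ v : V, (G.dist u v : ℝ) * K = (Fintype.card V : ℝ)) :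
    1 / K ≤ (G.diam : ℝ) ∧ (G.diam : ℝ) ≤ 2 / K := by
  have hne : Nonempty V := Fintype.card_pos_iff.mp (by omega)
  have hntop : G.ediam ≠ ⊤ := by
    obtain ⟨u, v, huv⟩ := G.exists_edist_eq_ediam_of_finite
    rw [← huv]
    exact SimpleGraph.edist_ne_top_iff_reachable.mpr (hG u v)
  set n := Fintype.card V with hn'
  have hnpos : (0:ℝ) < n := by positivity
  constructor
  · -- n = K * ∑ d(u,v) ≤ K * n * diam
    obtain ⟨u⟩ := hne
    have h1 : (n:ℝ) ≤ ∑ v : V, (G.diam : ℝ) * K := by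
      rw [← hK u]
      apply Finset.sum_le_sum
      intro v _
      have := G.dist_le_diam hntop (u := u) (v := v)
      exact mul_le_mul_of_nonneg_right (by exact_mod_cast this) hKpos.le
    rw [Finset.sum_const, Finset.card_univ, nsmul_eq_mul] at h1
    rw [div_le_iff₀ hKpos]
    nlinarith
  · obtain ⟨u, v, huv⟩ := G.exists_dist_eq_diam
    have htri : ∀ w : V, (G.diam : ℝ) ≤ (G.dist u w : ℝ) + (G.dist w v : ℝ) := by
      intro w
      have := hG.dist_triangle (u := u) (v := w) (w := v)
      rw [huv] at this
      exact_mod_cast this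
    have h2 : (n:ℝ) * (G.diam : ℝ) * K ≤ 2 * n := by
      have hs : ∑ w : V, (G.diam : ℝ) * K ≤
          ∑ w : V, ((G.dist u w : ℝ) * K + (G.dist w v : ℝ) * K) := by
        apply Finset.sum_le_sum
        intro w _
        nlinarith [htri w]
      rw [Finset.sum_const, Finset.card_univ, nsmul_eq_mul, Finset.sum_add_distrib] at hs
      have e1 : ∑ w : V, (G.dist u w : ℝ) * K = (n:ℝ) := hK u
      have e2 : ∑ w : V, (G.dist w v : ℝ) * K = (n:ℝ) := by
        rw [← hK v]
        exact Finset.sum_congr rfl fun w _ => by rw [SimpleGraph.dist_comm]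
      rw [e1, e2] at hs
      nlinarith
    rw [le_div_iff₀ hKpos]
    nlinarith
end
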